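/- Let χ_0 ∈ ℂ with Im(χ_0) ≠ 0 and χ_0 ≠ 0, let b_k ∈ ℝ with χ_0 + b_k ≠ 0, and let s ∈ ℝ (playing the role of ‖a‖²₂). Define x̄(x,t) = x + (2 Re(χ_0) + s)·t + 1/(2 Im(χ_0)), and define L_0(x,t) = x̄² + 4 Im(χ_0)² t² + (i/conj(χ_0))·( x̄ + 2 i Im(χ_0) t ) + 1/(4 Im(χ_0)²) and L_k(x,t) = x̄² + 4 Im(χ_0)² t² + P_1 x̄ + P_2 t + P_3, where P_1 = i·( (2 conj(χ_0) + b_k)(2 Re(χ_0) + b_k) − conj(χ_0)² ) / ( conj(χ_0)·|χ_0 + b_k|² ), P_2 = −2 Im(χ_0)·( χ_0² + 4 Im(χ_0)² + b_k (2 Re(χ_0) + b_k) ) / ( conj(χ_0)·|χ_0 + b_k|² ), and P_3 = ( χ_0³ − 2( conj(χ_0)² + i χ_0 Im(χ_0) )( 2 i Im(χ_0) − b_k ) + conj(χ_0)·b_k² ) / ( 4 conj(χ_0)·Im(χ_0)²·|χ_0 + b_k|² ). Then |L_k(x,t)|² / |L_0(x,t)|² → 1 as x² + t² → ∞; consequently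 the first-order rogue wave intensity |q_k^{[1]}(x,t)|² = a_k²·|L_k(x,t)|²/|L_0(x,t)|² tends to the background value a_k² as x² + t² → ∞. -/

import Mathlib

/-!
In the sheared coordinates `(x̄, t)` both `L_k` and `L₀` are the positive definite form
`x̄² + 4 Im(χ₀)² t²` plus an affine function of `(x̄, t)`. The form dominates `‖(x̄, t)‖²`, so the
affine parts are negligible and both polynomials are asymptotically equivalent to the form; hence
`L_k / L₀ → 1`. The shear is a homeomorphism of the plane, so `x̄² + t² → ∞` exactly when
`x² + t² → ∞`.
-/

noncomputable section

/-- `x̄(x,t) = x + (2 Re(χ₀) + s)·t + 1/(2 Im(χ₀))`. -/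
def xbarRW (χ₀ : ℂ) (s x t : ℝ) : ℝ :=
  x + (2 * χ₀.re + s) * t + 1 / (2 * χ₀.im)

/-- `L₀(x,t) = x̄² + 4 Im(χ₀)² t² + (i/conj χ₀)(x̄ + 2i Im(χ₀) t) + 1/(4 Im(χ₀)²)`. -/
def L0RW (χ₀ : ℂ) (s x t : ℝ) : ℂ :=
  (xbarRW χ₀ s x t : ℂ) ^ 2 + 4 * (χ₀.im : ℂ) ^ 2 * (t : ℂ) ^ 2 +
    (Complex.I / (starRingEnd ℂ χ₀)) * ((xbarRW χ₀ s x t : ℂ) + 2 * Complex.I * (χ₀.im : ℂ) * (t : ℂ)) +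
    1 / (4 * (χ₀.im : ℂ) ^ 2)

/-- `P₁ = i((2 conj χ₀ + b)(2 Re χ₀ + b) - conj(χ₀)²)/(conj χ₀ · |χ₀+b|²)`. -/
def P1RW (χ₀ : ℂ) (b : ℝ) : ℂ :=
  Complex.I * ((2 * (starRingEnd ℂ χ₀) + (b : ℂ)) * ((2 * χ₀.re + b : ℝ) : ℂ) -
      (starRingEnd ℂ χ₀) ^ 2) /
    ((starRingEnd ℂ χ₀) * (Complex.normSq (χ₀ + (b : ℂ)) : ℂ))

/-- `P₂ = -2 Im(χ₀)(χ₀² + 4 Im(χ₀)² + b(2 Re χ₀ + b))/(conj χ₀ · |χ₀+b|²)`. -/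
def P2RW (χ₀ : ℂ) (b : ℝ) : ℂ :=
  -2 * (χ₀.im : ℂ) * (χ₀ ^ 2 + 4 * (χ₀.im : ℂ) ^ 2 + (b : ℂ) * ((2 * χ₀.re + b : ℝ) : ℂ)) /
    ((starRingEnd ℂ χ₀) * (Complex.normSq (χ₀ + (b : ℂ)) : ℂ))

/-- `P₃ = (χ₀³ - 2(conj(χ₀)² + i χ₀ Im χ₀)(2i Im χ₀ - b) + conj(χ₀) b²)
      / (4 conj(χ₀) Im(χ₀)² |χ₀+b|²)`. -/
def P3RW (χ₀ : ℂ) (b : ℝ) : ℂ :=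
  (χ₀ ^ 3 - 2 * ((starRingEnd ℂ χ₀) ^ 2 + Complex.I * χ₀ * (χ₀.im : ℂ)) *
      (2 * Complex.I * (χ₀.im : ℂ) - (b : ℂ)) + (starRingEnd ℂ χ₀) * (b : ℂ) ^ 2) /
    (4 * (starRingEnd ℂ χ₀) * (χ₀.im : ℂ) ^ 2 * (Complex.normSq (χ₀ + (b : ℂ)) : ℂ))

/-- `L_k(x,t) = x̄² + 4 Im(χ₀)² t² + P₁ x̄ + P₂ t + P₃`. -/
def LkRW (χ₀ : ℂ) (b s x t : ℝ) : ℂ :=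
  (xbarRW χ₀ s x t : ℂ) ^ 2 + 4 * (χ₀.im : ℂ) ^ 2 * (t : ℂ) ^ 2 +
    P1RW χ₀ b * (xbarRW χ₀ s x t : ℂ) + P2RW χ₀ b * (t : ℂ) + P3RW χ₀ b

open Filter Asymptotics Topology

theorem min_one_mul_norm_sq_le {c : ℝ} (hc : 0 ≤ c) (q : ℝ × ℝ) :
    min 1 c * ‖q‖ ^ 2 ≤ q.1 ^ 2 + c * q.2 ^ 2 := by
  have hsup : ‖q‖ ^ 2 ≤ q.1 ^ 2 + q.2 ^ 2 := by
    rw [Prod.norm_def, Real.norm_eq_abs, Real.norm_eq_abs]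
    rcases max_choice |q.1| |q.2| with h | h <;> rw [h, sq_abs] <;>
      nlinarith [sq_nonneg q.1, sq_nonneg q.2]
  have hmin : 0 ≤ min 1 c := le_min zero_le_one hc
  nlinarith [mul_le_mul_of_nonneg_left hsup hmin,
    mul_nonneg (sub_nonneg.2 (min_le_left 1 c)) (sq_nonneg q.1),
    mul_nonneg (sub_nonneg.2 (min_le_right 1 c)) (sq_nonneg q.2)]

theorem eventually_quad_ne_zero {c : ℝ} (hc : 0 < c) :
    ∀ᶠ q in cocompact (ℝ × ℝ), ((q.1 ^ 2 + c * q.2 ^ 2 : ℝ) : ℂ) ≠ 0 := by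
  filter_upwards [tendsto_norm_cocompact_atTop.eventually_gt_atTop 0] with q hq
  have : 0 < min 1 c * ‖q‖ ^ 2 := by positivity
  exact Complex.ofReal_ne_zero.mpr (this.trans_le (min_one_mul_norm_sq_le hc.le q)).ne'

theorem isBigO_norm_sq_quad {c : ℝ} (hc : 0 < c) :
    (fun q : ℝ × ℝ => ‖q‖ ^ 2) =O[⊤] fun q => q.1 ^ 2 + c * q.2 ^ 2 := by
  refine isBigO_top.2 ⟨(min 1 c)⁻¹, fun q => ?_⟩
  have hmin : 0 < min 1 c := lt_min one_pos hc
  rw [norm_pow, norm_norm, Real.norm_of_nonneg (by positivity), le_inv_mul_iff₀ hmin]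
  exact min_one_mul_norm_sq_le hc.le q

theorem isBigO_affine_norm (α β γ : ℂ) :
    (fun q : ℝ × ℝ => α * q.1 + β * q.2 + γ) =O[cocompact (ℝ × ℝ)] fun q => ‖q‖ := by
  have h₁ : (fun q : ℝ × ℝ => α * q.1) =O[cocompact (ℝ × ℝ)] fun q => ‖q‖ :=
    isBigO_of_le' (c := ‖α‖) _ fun q => by
      rw [norm_mul, Complex.norm_real, norm_norm]; gcongr; exact norm_fst_le q
  have h₂ : (fun q : ℝ × ℝ => β * q.2) =O[cocompact (ℝ × ℝ)] fun q => ‖q‖ :=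
    isBigO_of_le' (c := ‖β‖) _ fun q => by
      rw [norm_mul, Complex.norm_real, norm_norm]; gcongr; exact norm_snd_le q
  have h₃ : (fun _ : ℝ × ℝ => γ) =O[cocompact (ℝ × ℝ)] fun q => ‖q‖ :=
    (isLittleO_const_left.2 <| Or.inr <| by
      simpa [Function.comp_def] using tendsto_norm_cocompact_atTop).isBigO
  exact (h₁.add h₂).add h₃

theorem isEquivalent_quad_add_affine {c : ℝ} (hc : 0 < c) (α β γ : ℂ) :
    (fun q : ℝ × ℝ => ((q.1 ^ 2 + c * q.2 ^ 2 : ℝ) : ℂ) + (α * q.1 + β * q.2 + γ))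
      ~[cocompact (ℝ × ℝ)] fun q => ((q.1 ^ 2 + c * q.2 ^ 2 : ℝ) : ℂ) := by
  have hnorm : (fun q : ℝ × ℝ => ‖q‖) =o[cocompact (ℝ × ℝ)] fun q => ‖q‖ ^ 2 := by
    simpa [Function.comp_def] using
      (isLittleO_pow_pow_atTop_of_lt (𝕜 := ℝ) one_lt_two).comp_tendsto tendsto_norm_cocompact_atTop
  have hreal : (fun q : ℝ × ℝ => q.1 ^ 2 + c * q.2 ^ 2) =O[cocompact (ℝ × ℝ)]
      fun q => ((q.1 ^ 2 + c * q.2 ^ 2 : ℝ) : ℂ) :=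
    isBigO_of_le _ fun q => by rw [Complex.norm_real]
  exact IsEquivalent.refl.add_isLittleO <| (isBigO_affine_norm α β γ).trans_isLittleO <|
    (hnorm.trans_isBigO ((isBigO_norm_sq_quad hc).mono le_top)).trans_isBigO hreal

theorem Asymptotics.IsEquivalent.tendsto_div_nhds_one {α 𝕜 : Type*} [NormedField 𝕜]
    {l : Filter α} {u v w : α → 𝕜} (hu : u ~[l] w) (hv : v ~[l] w)
    (hw : ∀ᶠ x in l, w x ≠ 0) :
    Tendsto (u / v) l (𝓝 1) := by
  have h := ((isEquivalent_iff_tendsto_one hw).mp hu).div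
    ((isEquivalent_iff_tendsto_one hw).mp hv) one_ne_zero
  rw [div_one] at h
  exact h.congr' (hw.mono fun x hx => div_div_div_cancel_right₀ hx _ _)

theorem tendsto_shear_cocompact (k m : ℝ) :
    Tendsto (fun p : ℝ × ℝ => (p.1 + k * p.2 + m, p.2)) (cocompact (ℝ × ℝ))
      (cocompact (ℝ × ℝ)) :=
  (Homeomorph.mk
    ⟨fun p => (p.1 + k * p.2 + m, p.2), fun q => (q.1 - k * q.2 - m, q.2),
      fun p => Prod.ext (by ring) rfl,
      fun q => Prod.ext (by ring) rfl⟩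
    (by fun_prop) (by fun_prop)).isClosedEmbedding.tendsto_cocompact

theorem rogue_wave_background_limit_general (χ₀ : ℂ) (him : χ₀.im ≠ 0)
    (b : ℝ) (s : ℝ) :
    Filter.Tendsto
        (fun p : ℝ × ℝ =>
          ‖LkRW χ₀ b s p.1 p.2‖ ^ 2 / ‖L0RW χ₀ s p.1 p.2‖ ^ 2)
        (Filter.cocompact (ℝ × ℝ)) (nhds 1) ∧
      ∀ a : ℝ,
        Filter.Tendsto
          (fun p : ℝ × ℝ =>
            a ^ 2 * (‖LkRW χ₀ b s p.1 p.2‖ ^ 2 /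
              ‖L0RW χ₀ s p.1 p.2‖ ^ 2))
          (Filter.cocompact (ℝ × ℝ)) (nhds (a ^ 2)) := by
  have hc : 0 < 4 * χ₀.im ^ 2 := by positivity
  have hratio : Tendsto (fun p : ℝ × ℝ => LkRW χ₀ b s p.1 p.2 / L0RW χ₀ s p.1 p.2)
      (cocompact (ℝ × ℝ)) (𝓝 1) := by
    have hLk := isEquivalent_quad_add_affine hc (P1RW χ₀ b) (P2RW χ₀ b) (P3RW χ₀ b)
    have hL0 := isEquivalent_quad_add_affine hc (Complex.I / starRingEnd ℂ χ₀)
      (Complex.I / starRingEnd ℂ χ₀ * (2 * Complex.I * χ₀.im)) (1 / (4 * (χ₀.im : ℂ) ^ 2))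
    refine ((hLk.tendsto_div_nhds_one hL0 (eventually_quad_ne_zero hc)).comp
      (tendsto_shear_cocompact (2 * χ₀.re + s) (1 / (2 * χ₀.im)))).congr fun p => ?_
    simp only [Function.comp_apply, Pi.div_apply, LkRW, L0RW, xbarRW]
    push_cast
    ring
  have hnorm := hratio.norm.pow 2
  simp only [norm_div, div_pow, norm_one, one_pow] at hnorm
  exact ⟨hnorm, fun a => by simpa using hnorm.const_mul (a ^ 2)⟩

/-- As `x² + t² → ∞`, `|L_k|²/|L₀|² → 1`; consequently the first-order rogue wave intensity
`|q_k^{[1]}|² = a_k² |L_k|²/|L₀|²` tends to the background value `a_k²`. -/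
theorem rogue_wave_background_limit (χ₀ : ℂ) (him : χ₀.im ≠ 0) (hχ₀ : χ₀ ≠ 0)
    (b : ℝ) (hb : χ₀ + (b : ℂ) ≠ 0) (s : ℝ) :
    Filter.Tendsto
        (fun p : ℝ × ℝ =>
          ‖LkRW χ₀ b s p.1 p.2‖ ^ 2 / ‖L0RW χ₀ s p.1 p.2‖ ^ 2)
        (Filter.cocompact (ℝ × ℝ)) (nhds 1) ∧
      ∀ a : ℝ,
        Filter.Tendsto
          (fun p : ℝ × ℝ =>
            a ^ 2 * (‖LkRW χ₀ b s p.1 p.2‖ ^ 2 /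
              ‖L0RW χ₀ s p.1 p.2‖ ^ 2))
          (Filter.cocompact (ℝ × ℝ)) (nhds (a ^ 2)) :=
  rogue_wave_background_limit_general χ₀ him b s

end
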